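/- Let ω : (0,1] → [0,∞), α > 0, λ ∈ (0,1), and C₀ > 0, and suppose that ω(βr) ≤ C₀ ω(r) for all r ∈ (0,1] and β ∈ [λ,1]. Then for every r ∈ (0,λ], sup_{ρ ∈ [r,λ]} ω(ρ)/ρ^α ≤ C₃ ∫_r^1 ω(ρ)/ρ^{1+α} dρ, where C₃ = C₀ / ((1-λ) λ^α). -/

import Mathlib

/-!
Put `b = ρ / λ`. For `s ∈ (ρ, b]` the ratio `ρ / s` lies in `[λ, 1]`, so quasi-monotonicity gives
`ω ρ ≤ C₀ ω s`, while `s ^ (1 + α) ≤ b ^ (1 + α)`. Hence the integrand is at least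
`ω ρ / (C₀ b ^ (1 + α))` on an interval of length `b - ρ = (1 - λ) b`, and this lower bound for the
integral equals `ω ρ / ρ ^ α` divided by `C₀ / ((1 - λ) λ ^ α)`.
-/

open MeasureTheory Set

lemma le_mul_of_quasiMonotone {ω : ℝ → ℝ} {lam C₀ : ℝ}
    (hquasi : ∀ r ∈ Ioc (0:ℝ) 1, ∀ β ∈ Icc lam 1, ω (β * r) ≤ C₀ * ω r)
    {ρ s : ℝ} (hs : s ∈ Ioc (0:ℝ) 1) (hlam_s : lam * s ≤ ρ) (hρs : ρ ≤ s) :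
    ω ρ ≤ C₀ * ω s := by
  have hs0 := hs.1
  have hβ : ρ / s ∈ Icc lam 1 := ⟨(le_div_iff₀ hs0).2 hlam_s, (div_le_one hs0).2 hρs⟩
  simpa [div_mul_cancel₀ ρ hs0.ne'] using hquasi s hs (ρ / s) hβ

lemma div_rpow_le_of_quasiMonotone {ω : ℝ → ℝ} {α lam C₀ : ℝ} (hα : 0 ≤ 1 + α) (hlam : 0 < lam)
    (hC₀ : 0 < C₀) (hquasi : ∀ r ∈ Ioc (0:ℝ) 1, ∀ β ∈ Icc lam 1, ω (β * r) ≤ C₀ * ω r)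
    {ρ s : ℝ} (hωρ : 0 ≤ ω ρ) (hρ : 0 < ρ) (hρlam : ρ ≤ lam) (hs : s ∈ Ioc ρ (ρ / lam)) :
    ω ρ / C₀ / (ρ / lam) ^ (1 + α) ≤ ω s / s ^ (1 + α) := by
  obtain ⟨hρs, hsb⟩ := hs
  have hs0 : 0 < s := hρ.trans hρs
  have hs1 : s ≤ 1 := hsb.trans ((div_le_one hlam).2 hρlam)
  have hlam_s : lam * s ≤ ρ := by
    rw [le_div_iff₀ hlam] at hsb
    linarith
  have hωs : ω ρ / C₀ ≤ ω s :=
    (div_le_iff₀ hC₀).2 (by linarith [le_mul_of_quasiMonotone hquasi ⟨hs0, hs1⟩ hlam_s hρs.le])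
  calc ω ρ / C₀ / (ρ / lam) ^ (1 + α) ≤ ω ρ / C₀ / s ^ (1 + α) := by gcongr
    _ ≤ ω s / s ^ (1 + α) := by gcongr

lemma ofReal_mul_ofReal_sub_le_setLIntegral_Ioc {f : ℝ → ℝ} {c a b : ℝ}
    (hf : ∀ s ∈ Ioc a b, c ≤ f s) :
    ENNReal.ofReal c * ENNReal.ofReal (b - a) ≤ ∫⁻ s in Ioc a b, ENNReal.ofReal (f s) := by
  rw [← Real.volume_Ioc, ← setLIntegral_const]
  exact setLIntegral_mono' measurableSet_Ioc fun s hs ↦ ENNReal.ofReal_le_ofReal (hf s hs)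

lemma div_rpow_eq_mul_lowerBound_mul_length {x α lam C₀ ρ : ℝ} (hlam : lam ∈ Ioo (0:ℝ) 1)
    (hC₀ : C₀ ≠ 0) (hρ : 0 < ρ) :
    x / ρ ^ α =
      C₀ / ((1 - lam) * lam ^ α) * (x / C₀ / (ρ / lam) ^ (1 + α) * (ρ / lam - ρ)) := by
  obtain ⟨hlam0, hlam1⟩ := hlam
  have h1lam : 1 - lam ≠ 0 := by linarith
  have hρα : ρ ^ α ≠ 0 := (Real.rpow_pos_of_pos hρ α).ne'
  have hlamα : lam ^ α ≠ 0 := (Real.rpow_pos_of_pos hlam0 α).ne'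
  rw [Real.div_rpow hρ.le hlam0.le, Real.rpow_add hρ, Real.rpow_add hlam0, Real.rpow_one,
    Real.rpow_one]
  field_simp

/-- Step-2 estimate of the Dini lemma: for a quasi-monotone nonnegative ω,
`sup_{ρ∈[r,λ]} ω(ρ)/ρ^α ≤ C₃ ∫_r^1 ω(ρ)/ρ^{1+α} dρ` with `C₃ = C₀/((1-λ)λ^α)`.
The supremum bound is expressed as a bound valid for every `ρ ∈ [r,λ]`. -/
theorem sup_omega_integral_bound (ω : ℝ → ℝ) (α lam C₀ : ℝ)
    (hα : 0 < α) (hlam : lam ∈ Set.Ioo (0:ℝ) 1) (hC₀ : 0 < C₀)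
    (hω0 : ∀ r ∈ Set.Ioc (0:ℝ) 1, 0 ≤ ω r)
    (hquasi : ∀ r ∈ Set.Ioc (0:ℝ) 1, ∀ β ∈ Set.Icc lam 1, ω (β * r) ≤ C₀ * ω r) :
    ∀ r ∈ Set.Ioc (0:ℝ) lam, ∀ ρ ∈ Set.Icc r lam,
      ENNReal.ofReal (ω ρ / ρ ^ α) ≤
        ENNReal.ofReal (C₀ / ((1 - lam) * lam ^ α)) *
          ∫⁻ s in Set.Ioc r 1, ENNReal.ofReal (ω s / s ^ (1 + α)) := by
  rintro r ⟨hr0, -⟩ ρ ⟨hrρ, hρlam⟩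
  have hρ : 0 < ρ := hr0.trans_le hrρ
  have hωρ : 0 ≤ ω ρ := hω0 ρ ⟨hρ, hρlam.trans hlam.2.le⟩
  have hC₃ : 0 ≤ C₀ / ((1 - lam) * lam ^ α) := by
    have : 0 < 1 - lam := by linarith [hlam.2]
    have := Real.rpow_pos_of_pos hlam.1 α
    positivity
  have hb : ρ ≤ ρ / lam := (le_div_iff₀ hlam.1).2 (mul_le_of_le_one_right hρ.le hlam.2.le)
  rw [div_rpow_eq_mul_lowerBound_mul_length hlam hC₀.ne' hρ, ENNReal.ofReal_mul hC₃,
    ENNReal.ofReal_mul' (sub_nonneg.2 hb)]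
  gcongr
  calc _ ≤ ∫⁻ s in Ioc ρ (ρ / lam), ENNReal.ofReal (ω s / s ^ (1 + α)) :=
        ofReal_mul_ofReal_sub_le_setLIntegral_Ioc fun s hs ↦
          div_rpow_le_of_quasiMonotone (by linarith) hlam.1 hC₀ hquasi hωρ hρ hρlam hs
    _ ≤ _ := lintegral_mono_set (Ioc_subset_Ioc hrρ ((div_le_one hlam.1).2 hρlam))
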